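/- Suppose the vertex set V of a graph G is partitioned into clusters C_1, ..., C_p, each inducing a connected subgraph of G of diameter at most D, and suppose the 'cluster graph' G_C (with one node per cluster, two clusters adjacent iff some edge of G joins them) admits a partition of its nodes into q color classes such that each monochromatic connected component of G_C has diameter at most D' (in G_C). Then assigning each vertex of G the color of its cluster yields a partition of V into q classes such that every monochromatic connected component of G has diameter at most (D'+1)·(D+1) + D' ≤ O(D·D') in G. -/

import Mathlib

/-- The cluster graph of a graph `G` with respect to a cluster assignment
`f : V → Fin p`: clusters are adjacent iff some edge of `G` joins them. -/
def clusterGraph {V : Type*} {p : ℕ} (G : SimpleGraph V) (f : V → Fin p) :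
    SimpleGraph (Fin p) where
  Adj i j := i ≠ j ∧ ∃ x y : V, f x = i ∧ f y = j ∧ G.Adj x y
  symm := by
    constructor
    rintro i j ⟨hne, x, y, hx, hy, hxy⟩
    exact ⟨hne.symm, y, x, hy, hx, hxy.symm⟩
  loopless := by
    constructor
    rintro i ⟨hne, -⟩
    exact hne rfl

/-! A monochromatic walk in `G` contracts to a monochromatic walk in the cluster graph, so the
clusters of its endpoints are at distance at most `D'` there. A shortest walk between them
lifts back to `G`: each of its edges is realised by an edge of `G`, and consecutive edges are
joined inside a cluster by a walk of length at most `D`. -/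

namespace SimpleGraph

variable {V : Type*} {p : ℕ} {G : SimpleGraph V} {f : V → Fin p}

theorem Walk.exists_clusterGraph_walk {x y : V} (w : G.Walk x y) :
    ∃ W : (clusterGraph G f).Walk (f x) (f y), ∀ i ∈ W.support, ∃ z ∈ w.support, f z = i := by
  induction w with
  | nil => exact ⟨.nil, by simp⟩
  | @cons a b c hab w ih =>
    obtain ⟨W, hW⟩ := ih
    have hW' : ∀ i ∈ W.support, ∃ z ∈ (Walk.cons hab w).support, f z = i := fun i hi => by
      obtain ⟨z, hz, rfl⟩ := hW i hi
      exact ⟨z, by simp [hz], rfl⟩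
    by_cases h : f a = f b
    · exact ⟨W.copy h.symm rfl, by simpa using hW'⟩
    · refine ⟨.cons ⟨h, a, b, rfl, rfl, hab⟩ W, fun i hi => ?_⟩
      rcases (Walk.mem_support_iff _).1 hi with rfl | hi
      · exact ⟨a, by simp, rfl⟩
      · exact hW' i hi

theorem Walk.exists_walk_of_clusterGraph_walk {D : ℕ}
    (hcluster : ∀ x y : V, f x = f y → ∃ w : G.Walk x y, w.length ≤ D)
    {i j : Fin p} (W : (clusterGraph G f).Walk i j) {x y : V} (hx : f x = i) (hy : f y = j) :
    ∃ u : G.Walk x y, u.length ≤ (W.length + 1) * D + W.length := by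
  induction W generalizing x with
  | nil =>
    obtain ⟨u, hu⟩ := hcluster x y (hx.trans hy.symm)
    exact ⟨u, by simpa using hu⟩
  | cons h W ih =>
    rw [Walk.length_cons]
    obtain ⟨-, a, b, ha, hb, hab⟩ := h
    obtain ⟨u₁, hu₁⟩ := hcluster x a (hx.trans ha.symm)
    obtain ⟨u₂, hu₂⟩ := ih hb hy
    refine ⟨u₁.append (.cons hab u₂), ?_⟩
    rw [Walk.length_append, Walk.length_cons]
    nlinarith

end SimpleGraph

/-- Lifting a network decomposition of the cluster graph to the original graph:
if every cluster induces a connected subgraph of diameter at most `D` and a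
coloring of the cluster graph has monochromatic components of diameter at most
`D'`, then coloring each vertex by the color of its cluster yields monochromatic
components of diameter at most `(D'+1)(D+1) + D'` in `G`. -/
theorem stmt_18 {V : Type*} {p q : ℕ} (G : SimpleGraph V) (f : V → Fin p)
    (D D' : ℕ)
    (hcluster : ∀ x y : V, f x = f y →
      ∃ w : G.Walk x y, w.length ≤ D ∧ ∀ z ∈ w.support, f z = f x)
    (col : Fin p → Fin q)
    (hdecomp : ∀ i j : Fin p,
      (∃ w : (clusterGraph G f).Walk i j, ∀ z ∈ w.support, col z = col i) →
      (clusterGraph G f).dist i j ≤ D') :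
    ∀ x y : V, (∃ w : G.Walk x y, ∀ z ∈ w.support, col (f z) = col (f x)) →
      G.dist x y ≤ (D' + 1) * (D + 1) + D' := by
  rintro x y ⟨w, hw⟩
  obtain ⟨W₀, hW₀⟩ := w.exists_clusterGraph_walk (f := f)
  have hW₀_mono : ∀ i ∈ W₀.support, col i = col (f x) := fun i hi => by
    obtain ⟨z, hz, rfl⟩ := hW₀ i hi
    exact hw z hz
  obtain ⟨W, hW⟩ := W₀.reachable.exists_walk_length_eq_dist
  have hWD' : W.length ≤ D' := hW ▸ hdecomp _ _ ⟨W₀, hW₀_mono⟩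
  obtain ⟨u, hu⟩ := W.exists_walk_of_clusterGraph_walk
    (fun x y hxy => (hcluster x y hxy).imp fun _ h => h.1) rfl rfl
  calc G.dist x y ≤ u.length := SimpleGraph.dist_le u
    _ ≤ (W.length + 1) * D + W.length := hu
    _ ≤ (D' + 1) * (D + 1) + D' := by nlinarith
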